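/- The tree language L_ab over Σ = {a⁽²⁾, b⁽²⁾, #⁽⁰⁾} consisting of all trees every complete path word of which has the form aⁿbⁿ# for some n ≥ 1 is not recognizable by any global Parikh tree automaton. -/

import Mathlib

/-! ## Trees over ranked alphabets: a symbol `s` has `ar s` children -/

inductive GTree (S : Type) (ar : S → ℕ) : Type where
  | node (s : S) (c : Fin (ar s) → GTree S ar) : GTree S ar

namespace GTree
variable {S : Type} {ar : S → ℕ}

/-- The height of a tree (leaves have height 0). -/
def height : GTree S ar → ℕ
  | node _ c => Finset.univ.sup fun i => height (c i) + 1

/-- The size (number of positions) of a tree. -/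
def size : GTree S ar → ℕ
  | node _ c => 1 + ∑ i, size (c i)

/-- The subtree at a position (a list of child indices), if the position exists. -/
def subAt : GTree S ar → List ℕ → Option (GTree S ar)
  | t, [] => some t
  | node s c, i :: ρ => if h : i < ar s then subAt (c ⟨i, h⟩) ρ else none

/-- The list of path words of all complete (root-to-leaf) paths. -/
def pathWords : GTree S ar → List (List S)
  | node s c =>
    if _ : ar s = 0 then [[s]]
    else ((List.finRange (ar s)).map fun i => (pathWords (c i)).map (s :: ·)).flatten

end GTree

/-! ## Semilinear sets -/

def IsLinearSet' {m : ℕ} (C : Set (Fin m → ℕ)) : Prop :=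
  ∃ (l : ℕ) (d0 : Fin m → ℕ) (d : Fin l → Fin m → ℕ),
    C = {v | ∃ c : Fin l → ℕ, v = d0 + ∑ i, c i • d i}

def IsSemilinear {m : ℕ} (C : Set (Fin m → ℕ)) : Prop :=
  ∃ (k : ℕ) (L : Fin k → Set (Fin m → ℕ)), (∀ i, IsLinearSet' (L i)) ∧ C = ⋃ i, L i

/-! ## Global Parikh tree automata (GPTA) -/

structure GPTA (S : Type) (ar : S → ℕ) (m : ℕ) where
  Q : Type
  finQ : Fintype Q
  init : Q
  D : Finset (Fin m → ℕ)
  trans : Q → (s : S) → (Fin m → ℕ) → (Fin (ar s) → Q) → Prop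
  transD : ∀ q s d f, trans q s d f → d ∈ D
  C : Set (Fin m → ℕ)
  semiC : IsSemilinear C

/-- `A.Run q ξ v` : there is a run of `A` from state `q` on a `D`-decoration of `ξ`
whose extended Parikh image (the sum of all vectors over all positions) is `v`. -/
inductive GPTA.Run {S : Type} {ar : S → ℕ} {m : ℕ} (A : GPTA S ar m) :
    A.Q → GTree S ar → (Fin m → ℕ) → Prop where
  | node {q : A.Q} {s : S} {d : Fin m → ℕ} {f : Fin (ar s) → A.Q}
      {c : Fin (ar s) → GTree S ar} {v : Fin (ar s) → Fin m → ℕ}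
      (ht : A.trans q s d f) (hc : ∀ i, GPTA.Run A (f i) (c i) (v i)) :
      GPTA.Run A q (.node s c) (d + ∑ i, v i)

def GPTA.Lang {S : Type} {ar : S → ℕ} {m : ℕ} (A : GPTA S ar m) : Set (GTree S ar) :=
  {ξ | ∃ v, A.Run A.init ξ v ∧ v ∈ A.C}

/-! ## The ranked alphabet {a⁽²⁾, b⁽²⁾, #⁽⁰⁾} and the tree language L_ab -/

inductive Sab : Type where | a | b | hash
  deriving DecidableEq

def arAb : Sab → ℕ
  | .a => 2
  | .b => 2
  | .hash => 0

instance : Fintype Sab :=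
  ⟨⟨{Sab.a, Sab.b, Sab.hash}, by decide⟩, fun x => by cases x <;> decide⟩

/-- All trees each of whose complete path words has the form `aⁿbⁿ#`, `n ≥ 1`. -/
def Lab : Set (GTree Sab arAb) :=
  {ξ | ∀ w ∈ ξ.pathWords, ∃ n ≥ 1,
    w = List.replicate n Sab.a ++ List.replicate n Sab.b ++ [Sab.hash]}

/-!
Let `N = |Q| + 1` and let `ξ` be the `a`-spine of length `N` whose `t`-th node carries `Bin(t + 1)`
and which ends in `Bin(N)`; then `ξ ∈ L_ab`. In an accepting run on `ξ` two of the hanging trees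
`Bin(i + 1)`, `Bin(j + 1)`, `i ≠ j`, are entered in the same state, so swapping them yields an
accepting run with the same global sum, since that sum does not see the order of its summands.
The swapped tree has the path word `aⁱ⁺¹ bʲ⁺¹ #`, so it is not in `L_ab`.
-/

namespace GTree

variable {S : Type} {ar : S → ℕ}

theorem mem_pathWords_node_of_ar_ne_zero {s : S} (c : Fin (ar s) → GTree S ar) (hs : ar s ≠ 0)
    {w : List S} : w ∈ (node s c).pathWords ↔ ∃ i, ∃ u ∈ (c i).pathWords, w = s :: u := by
  simp [pathWords, hs, eq_comm]

end GTree

/-- `Bin(k)` of the paper: the complete binary `b`-tree of height `k` with `#`-leaves. -/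
def bTree : ℕ → GTree Sab arAb
  | 0 => .node .hash Fin.elim0
  | k + 1 => .node .b ![bTree k, bTree k]

/-- An `a`-spine of length `n` ending in `bottom`, with `ts t` hanging off its `t`-th node. -/
def spine (bottom : GTree Sab arAb) : {n : ℕ} → (Fin n → GTree Sab arAb) → GTree Sab arAb
  | 0, _ => bottom
  | _ + 1, ts => .node .a ![spine bottom (Fin.tail ts), ts 0]

theorem mem_pathWords_bTree {k : ℕ} {w : List Sab} :
    w ∈ (bTree k).pathWords ↔ w = List.replicate k Sab.b ++ [Sab.hash] := by
  induction k generalizing w with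
  | zero => simp [bTree, GTree.pathWords, arAb]
  | succ k ih =>
    refine (GTree.mem_pathWords_node_of_ar_ne_zero (ar := arAb) (s := .b)
      ![bTree k, bTree k] (by decide)).trans ?_
    dsimp only [arAb]
    simp [Fin.exists_fin_two, ih, List.replicate_succ]

theorem mem_pathWords_spine (bottom : GTree Sab arAb) {n : ℕ} (ts : Fin n → GTree Sab arAb)
    {w : List Sab} : w ∈ (spine bottom ts).pathWords ↔
      (∃ t : Fin n, ∃ u ∈ (ts t).pathWords, w = List.replicate (t + 1) Sab.a ++ u) ∨
        ∃ u ∈ bottom.pathWords, w = List.replicate n Sab.a ++ u := by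
  induction n generalizing w with
  | zero => simp [spine]
  | succ n ih =>
    refine (GTree.mem_pathWords_node_of_ar_ne_zero (ar := arAb) (s := .a)
      ![spine bottom (Fin.tail ts), ts 0] (by decide)).trans ?_
    dsimp only [arAb]
    rw [Fin.exists_fin_two, Fin.exists_fin_succ]
    simp only [Matrix.cons_val_zero, Matrix.cons_val_one, ih, Fin.tail]
    simp [List.replicate_succ, or_and_right, exists_or, or_comm, or_left_comm]

theorem exists_eq_Lab_word_iff {p q : ℕ} :
    (∃ n ≥ 1, List.replicate p Sab.a ++ (List.replicate q Sab.b ++ [Sab.hash]) =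
        List.replicate n Sab.a ++ List.replicate n Sab.b ++ [Sab.hash]) ↔ 1 ≤ p ∧ q = p := by
  constructor
  · rintro ⟨n, hn, h⟩
    have ha := congrArg (List.count Sab.a) h
    have hb := congrArg (List.count Sab.b) h
    simp [List.count_replicate] at ha hb
    omega
  · rintro ⟨hp, rfl⟩
    exact ⟨q, hp, by simp⟩

theorem spine_bTree_mem_Lab {N : ℕ} (hN : 1 ≤ N) :
    spine (bTree N) (fun t : Fin N => bTree (t + 1)) ∈ Lab := by
  intro w hw
  rcases (mem_pathWords_spine _ _).1 hw with ⟨t, u, hu, rfl⟩ | ⟨u, hu, rfl⟩ <;>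
    rw [mem_pathWords_bTree] at hu <;> subst hu
  · exact exists_eq_Lab_word_iff.2 ⟨by omega, rfl⟩
  · exact exists_eq_Lab_word_iff.2 ⟨hN, rfl⟩

theorem spine_not_mem_Lab_of_eq_bTree {n : ℕ} (bottom : GTree Sab arAb) {ts : Fin n → GTree Sab arAb}
    {i : Fin n} {k : ℕ} (hi : ts i = bTree k) (hk : k ≠ i + 1) : spine bottom ts ∉ Lab := by
  intro hLab
  have hw : List.replicate (i + 1) Sab.a ++ (List.replicate k Sab.b ++ [Sab.hash]) ∈
      (spine bottom ts).pathWords :=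
    (mem_pathWords_spine _ _).2 (.inl ⟨i, _, by rw [hi, mem_pathWords_bTree], rfl⟩)
  exact hk (exists_eq_Lab_word_iff.1 (hLab _ hw)).2

namespace GPTA

variable {m : ℕ} {A : GPTA Sab arAb m} {bottom : GTree Sab arAb}

theorem run_node_a_iff {q : A.Q} {l r : GTree Sab arAb} {v : Fin m → ℕ} :
    A.Run q (.node .a ![l, r]) v ↔ ∃ (d : Fin m → ℕ) (f : Fin 2 → A.Q) (vl vr : Fin m → ℕ),
      A.trans q .a d f ∧ A.Run (f 0) l vl ∧ A.Run (f 1) r vr ∧ v = d + (vl + vr) := by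
  constructor
  · rintro @⟨_, _, d, f, _, vs, ht, hc⟩
    exact ⟨d, f, vs (0 : Fin 2), vs (1 : Fin 2), ht, hc (0 : Fin 2), hc (1 : Fin 2),
      congrArg (d + ·) (Fin.sum_univ_two vs)⟩
  · rintro ⟨d, f, vl, vr, ht, hl, hr, rfl⟩
    convert Run.node (A := A) (s := .a) (c := ![l, r]) (v := ![vl, vr]) ht
      (Fin.forall_fin_two.2 ⟨hl, hr⟩) using 2
    exact (Fin.sum_univ_two (M := Fin m → ℕ) ![vl, vr]).symm

theorem Run.spine_split {n : ℕ} {ts : Fin n → GTree Sab arAb} {q : A.Q} {v : Fin m → ℕ}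
    (h : A.Run q (spine bottom ts) v) :
    ∃ (rs : Fin n → A.Q) (us : Fin n → Fin m → ℕ) (w : Fin m → ℕ),
      (∀ t, A.Run (rs t) (ts t) (us t)) ∧ v = w + ∑ t, us t ∧
      ∀ (ts' : Fin n → GTree Sab arAb) (us' : Fin n → Fin m → ℕ),
        (∀ t, A.Run (rs t) (ts' t) (us' t)) → A.Run q (spine bottom ts') (w + ∑ t, us' t) := by
  induction n generalizing q v with
  | zero =>
    refine ⟨Fin.elim0, Fin.elim0, v, fun t => t.elim0, by simp, fun ts' us' _ => ?_⟩
    simpa [spine] using h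
  | succ n ih =>
    obtain ⟨d, f, vl, vr, ht, hl, hr, rfl⟩ := run_node_a_iff.1 h
    obtain ⟨rs, us, w, hrun, rfl, hctx⟩ := ih hl
    refine ⟨Fin.cons (f 1) rs, Fin.cons vr us, d + w, Fin.cases hr hrun,
      by simp only [Fin.sum_cons]; abel, fun ts' us' hts' => ?_⟩
    refine run_node_a_iff.2 ⟨d, f, w + ∑ t : Fin n, us' t.succ, us' 0, ht,
      hctx (Fin.tail ts') (Fin.tail us') fun (t : Fin n) => hts' t.succ, hts' 0, ?_⟩
    rw [Fin.sum_univ_succ]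
    abel

theorem Run.exists_spine_comp_swap [Fintype A.Q] {n : ℕ} (hn : Fintype.card A.Q < n)
    {ts : Fin n → GTree Sab arAb} {q : A.Q} {v : Fin m → ℕ} (h : A.Run q (spine bottom ts) v) :
    ∃ i j, i ≠ j ∧ A.Run q (spine bottom (ts ∘ Equiv.swap i j)) v := by
  obtain ⟨rs, us, w, hrun, rfl, hctx⟩ := h.spine_split
  obtain ⟨i, j, hij, hrs⟩ := Fintype.exists_ne_map_eq_of_card_lt rs (by simpa using hn)
  refine ⟨i, j, hij, ?_⟩
  have hswap := hctx (ts ∘ Equiv.swap i j) (us ∘ Equiv.swap i j) fun t => by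
    simpa only [Function.comp, Equiv.apply_swap_eq_self hrs] using hrun (Equiv.swap i j t)
  rwa [show ∑ t, (us ∘ Equiv.swap i j) t = ∑ t, us t from Equiv.sum_comp _ us] at hswap

end GPTA

theorem Lab_not_GPTA_recognizable :
    ¬ ∃ (m : ℕ) (A : GPTA Sab arAb m), A.Lang = Lab := by
  rintro ⟨m, A, hL⟩
  let _ : Fintype A.Q := A.finQ
  set N := Fintype.card A.Q + 1
  obtain ⟨v, hrun, hC⟩ : spine (bTree N) (fun t : Fin N => bTree (t + 1)) ∈ A.Lang :=
    hL ▸ spine_bTree_mem_Lab (by omega)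
  obtain ⟨i, j, hij, hswap⟩ := hrun.exists_spine_comp_swap (by omega)
  have hLab : spine (bTree N) ((fun t : Fin N => bTree (t + 1)) ∘ Equiv.swap i j) ∈ Lab :=
    hL ▸ ⟨v, hswap, hC⟩
  exact spine_not_mem_Lab_of_eq_bTree _ (i := i) (k := j + 1) (by simp)
    (fun h => hij (Fin.ext (by omega))) hLab
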